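/- arXiv:0909.0799 — 4 statements merged into one kernel-verified Lean document; each statement's English description precedes it below -/
import Mathlib

section
/- Let D be a Dedekind domain that contains an infinite field. Then every subgroup H of finite index in SL₂(D) has level D; that is, T(r) belongs to the normal core of H in SL₂(D) for every r ∈ D. -/
open Matrix

/-- The translation matrix `T(r) = [[1, r], [0, 1]]` in `SL₂(R)`. -/
def Tm (R : Type*) [CommRing R] (r : R) : Matrix.SpecialLinearGroup (Fin 2) R :=
  ⟨!![1, r; 0, 1], by simp [Matrix.det_fin_two_of]⟩

/-- The principal congruence subgroup `SL₂(R, 𝔮)`, the kernel of reduction mod `𝔮`. -/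
def SLmod (R : Type*) [CommRing R] (q : Ideal R) :
    Subgroup (Matrix.SpecialLinearGroup (Fin 2) R) :=
  (Matrix.SpecialLinearGroup.map (Ideal.Quotient.mk q)).ker

/-- `H` is a congruence subgroup: it contains a principal congruence subgroup of
nonzero level. -/
def IsCongruence {R : Type*} [CommRing R]
    (H : Subgroup (Matrix.SpecialLinearGroup (Fin 2) R)) : Prop :=
  ∃ q : Ideal R, q ≠ ⊥ ∧ SLmod R q ≤ H

/-- `q` is the level `l(H)` of `H`: the largest ideal all of whose associated translations
lie in the normal core of `H` (equivalently, the largest ideal contained in the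
quasi-level of `H`). -/
def IsLevel {R : Type*} [CommRing R]
    (H : Subgroup (Matrix.SpecialLinearGroup (Fin 2) R)) (q : Ideal R) : Prop :=
  (∀ r ∈ q, Tm R r ∈ H.normalCore) ∧
    ∀ I : Ideal R, (∀ r ∈ I, Tm R r ∈ H.normalCore) → I ≤ q

/-!
Let `N` be the normal core of `H` and `Q = {r | T(r) ∈ N}`. Since `r ↦ T(r)` is a homomorphism
and `N` is normal of finite index, `Q` is an additive subgroup of finite index in `D`, and
conjugating by `diag(c, c⁻¹)` shows `c² Q ⊆ Q` for every `c ∈ k`. Over an infinite field such a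
subgroup is everything: pigeonhole in `D ⧸ Q` gives `w ≠ 0` with `w r ∈ Q`, and `w⁻¹` is a
difference of two squares; in characteristic `2`, where this fails, `a ↦ a² r` is additive and
the same pigeonhole gives `e ≠ 0` with `e² r ∈ Q`.
-/

theorem AddSubgroup.exists_ne_zero_map_mem {A M : Type*} [AddGroup A] [Infinite A] [AddGroup M]
    (f : A →+ M) (Q : AddSubgroup M) [Q.FiniteIndex] : ∃ a ≠ 0, f a ∈ Q := by
  obtain ⟨a, b, hab, h⟩ := Finite.exists_ne_map_eq_of_infinite fun a ↦ (f a : M ⧸ Q)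
  refine ⟨-a + b, fun h0 ↦ hab (neg_add_eq_zero.mp h0), ?_⟩
  rw [map_add, map_neg]
  exact QuotientAddGroup.eq.mp h

theorem AddSubgroup.eq_top_of_sq_smul_mem {K M : Type*} [Field K] [Infinite K] [AddCommGroup M]
    [Module K M] (Q : AddSubgroup M) [Q.FiniteIndex] (hQ : ∀ c : K, ∀ x ∈ Q, c ^ 2 • x ∈ Q) :
    Q = ⊤ := by
  refine eq_top_iff.mpr fun x _ ↦ ?_
  by_cases h2 : (2 : K) = 0
  · let sqSMul : K →+ M :=
      { toFun a := a ^ 2 • x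
        map_zero' := by simp
        map_add' a b := by rw [add_sq, h2, zero_mul, zero_mul, add_zero, add_smul] }
    obtain ⟨e, he, hex⟩ := Q.exists_ne_zero_map_mem sqSMul
    simpa [sqSMul, smul_smul, he] using hQ e⁻¹ _ hex
  · obtain ⟨w, hw, hwx⟩ := Q.exists_ne_zero_map_mem (smulAddHom K M |>.flip x)
    have hdiff : w⁻¹ = ((w⁻¹ + 1) / 2) ^ 2 - ((w⁻¹ - 1) / 2) ^ 2 := by
      field_simp
      ring
    have := Q.sub_mem (hQ ((w⁻¹ + 1) / 2) _ hwx) (hQ ((w⁻¹ - 1) / 2) _ hwx)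
    rwa [← sub_smul, ← hdiff, AddMonoidHom.flip_apply, smulAddHom_apply, smul_smul,
      inv_mul_cancel₀ hw, one_smul] at this

section Translation

variable {R : Type*} [CommRing R]

lemma coe_Tm (r : R) : (Tm R r : Matrix (Fin 2) (Fin 2) R) = !![1, r; 0, 1] := rfl

lemma Tm_add (x y : R) : Tm R (x + y) = Tm R x * Tm R y := by
  ext i j
  rw [Matrix.SpecialLinearGroup.coe_mul, coe_Tm, coe_Tm, coe_Tm, mul_fin_two]
  simp [add_comm]

lemma Tm_zero : Tm R 0 = 1 := by
  ext i j
  simp [coe_Tm, one_fin_two]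

variable (R) in
def translationHom : R →+ Additive (SpecialLinearGroup (Fin 2) R) where
  toFun r := .ofMul (Tm R r)
  map_zero' := Tm_zero
  map_add' := Tm_add

lemma exists_conj_Tm_eq_Tm_units_sq_mul (u : Rˣ) (x : R) :
    ∃ d : SpecialLinearGroup (Fin 2) R, d * Tm R x * d⁻¹ = Tm R (u ^ 2 * x) := by
  let d : SpecialLinearGroup (Fin 2) R := ⟨!![(u : R), 0; 0, ↑u⁻¹], by simp [det_fin_two_of]⟩
  have hd : (d : Matrix (Fin 2) (Fin 2) R) = !![(u : R), 0; 0, ↑u⁻¹] := rfl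
  refine ⟨d, mul_inv_eq_of_eq_mul ?_⟩
  ext i j
  rw [Matrix.SpecialLinearGroup.coe_mul, Matrix.SpecialLinearGroup.coe_mul, hd, coe_Tm, coe_Tm,
    mul_fin_two, mul_fin_two]
  fin_cases i <;> fin_cases j <;> simp [sq, mul_right_comm _ x]

/-- The quasi-level `ql(H)`. -/
def quasiLevel (H : Subgroup (SpecialLinearGroup (Fin 2) R)) : AddSubgroup R :=
  H.normalCore.toAddSubgroup.comap (translationHom R)

variable {H : Subgroup (SpecialLinearGroup (Fin 2) R)}

lemma mem_quasiLevel {r : R} : r ∈ quasiLevel H ↔ Tm R r ∈ H.normalCore := Iff.rfl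

instance quasiLevel_finiteIndex [H.FiniteIndex] : (quasiLevel H).FiniteIndex := by
  have : quasiLevel H =
      ((QuotientGroup.mk' H.normalCore).toAdditive.comp (translationHom R)).ker := by
    ext r
    rw [AddMonoidHom.mem_ker]
    exact (QuotientGroup.eq_one_iff (N := H.normalCore) _).symm
  rw [this]
  infer_instance

lemma sq_mul_mem_quasiLevel {c : R} (hc : IsUnit c) {x : R} (hx : x ∈ quasiLevel H) :
    c ^ 2 * x ∈ quasiLevel H := by
  obtain ⟨u, rfl⟩ := hc
  obtain ⟨d, hd⟩ := exists_conj_Tm_eq_Tm_units_sq_mul u x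
  rw [mem_quasiLevel, ← hd]
  exact H.normalCore_normal.conj_mem _ hx d

end Translation

theorem statement1_general {D : Type*} [CommRing D]
    (k : Subring D) (hk : IsField k) (hki : Infinite k)
    (H : Subgroup (Matrix.SpecialLinearGroup (Fin 2) D)) (hH : H.FiniteIndex) :
    ∀ r : D, Tm D r ∈ H.normalCore := by
  let := hk.toField
  have hQ : quasiLevel H = ⊤ := by
    refine (quasiLevel H).eq_top_of_sq_smul_mem (K := k) fun c x hx ↦ ?_
    rcases eq_or_ne c 0 with rfl | hc
    · simp
    · rw [Subring.smul_def, SubmonoidClass.coe_pow]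
      exact sq_mul_mem_quasiLevel ((IsUnit.mk0 c hc).map k.subtype) hx
  exact fun r ↦ mem_quasiLevel.mp (hQ ▸ AddSubgroup.mem_top r)

/-- Lemma 1.7. If the Dedekind domain `D` contains an infinite field,
then every finite-index subgroup `H` of `SL₂(D)` has level `D`, i.e. `T(r)` lies in the
normal core of `H` for every `r ∈ D`. -/
theorem statement1 {D : Type*} [CommRing D] [IsDomain D] [IsDedekindDomain D]
    (k : Subring D) (hk : IsField k) (hki : Infinite k)
    (H : Subgroup (Matrix.SpecialLinearGroup (Fin 2) D)) (hH : H.FiniteIndex) :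
    ∀ r : D, Tm D r ∈ H.normalCore :=
  statement1_general k hk hki H hH
end

section
/- Let D be a Dedekind domain and H a congruence subgroup of SL₂(D). Then there exists g₀ ∈ SL₂(D) such that c(H,g₀) ⊆ c(H,g) for every g ∈ SL₂(D); consequently the intersection ⋂_{g ∈ SL₂(D)} c(H,g) of all cusp amplitudes of H equals c(H,g₀) and is itself a cusp amplitude of H; in particular the level l(H) is a cusp amplitude of H. -/
/-!
Let `SL₂(D, 𝔫) ≤ H` with `𝔫 ≠ 0`, and factor `𝔫 = ∏ 𝔭 ^ n_𝔭`. Every cusp amplitude contains `𝔫`,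
so it is the intersection of its components `c(H,g) + 𝔭 ^ n_𝔭`, each of which is a power of `𝔭`;
for each `𝔭` pick `g_𝔭` whose `𝔭`-component is smallest.

Since `D ⧸ 𝔭 ^ n` is local, `SL₂(D ⧸ 𝔭 ^ n)` is generated by elementary matrices, and these lift
to `SL₂(D, 𝔟)` for every `𝔟` coprime to `𝔭`. By the Chinese remainder theorem there is therefore
one `g₀` with `g₀ ≡ g_𝔭 (mod 𝔭 ^ n_𝔭)` for all `𝔭`. If `g ≡ g' (mod 𝔞)` and `x 𝔞 ⊆ 𝔫`, then
`g T(x) g⁻¹ ≡ g' T(x) g'⁻¹ (mod 𝔫)`; with `𝔞 = 𝔭 ^ n_𝔭` this gives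
`c(H,g₀) ∩ 𝔫 𝔭 ^ (-n_𝔭) ⊆ c(H,g_𝔭)`, so every component of `c(H,g₀)` is the smallest one and
`c(H,g₀)` lies in every cusp amplitude. The level is the intersection of all cusp amplitudes.
-/

open Matrix

/-- `c` is the cusp amplitude `c(H,g)` of `H` at `g`: the largest ideal contained in the
quasi-amplitude `b(H,g) = {x | g · T(x) · g⁻¹ ∈ H}`. -/
def IsCuspAmplitude {R : Type*} [CommRing R]
    (H : Subgroup (Matrix.SpecialLinearGroup (Fin 2) R))
    (g : Matrix.SpecialLinearGroup (Fin 2) R) (c : Ideal R) : Prop :=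
  (∀ x ∈ c, g * Tm R x * g⁻¹ ∈ H) ∧
    ∀ I : Ideal R, (∀ x ∈ I, g * Tm R x * g⁻¹ ∈ H) → I ≤ c

open scoped MatrixGroups

def Lm (R : Type*) [CommRing R] (r : R) : SL(2, R) :=
  ⟨!![1, 0; r, 1], by simp [Matrix.det_fin_two_of]⟩

namespace Ideal

variable {R : Type*} [CommRing R]

lemma prod_sup_le_sup_prod {ι : Type*} (J : Ideal R) (s : Finset ι) (C : ι → Ideal R) :
    ∏ i ∈ s, (J ⊔ C i) ≤ J ⊔ ∏ i ∈ s, C i := by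
  classical
  induction s using Finset.induction_on with
  | empty => simp
  | insert a s ha ih =>
    rw [Finset.prod_insert ha, Finset.prod_insert ha]
    calc (J ⊔ C a) * ∏ i ∈ s, (J ⊔ C i) ≤ (J ⊔ C a) * (J ⊔ ∏ i ∈ s, C i) := mul_mono_right ih
      _ ≤ J ⊔ C a * ∏ i ∈ s, C i := by
        rw [sup_mul, mul_sup (C a)]
        exact sup_le (mul_le_left.trans le_sup_left)
          (sup_le (mul_le_right.trans le_sup_left) le_sup_right)

lemma biInf_sup_eq_of_prod_le {ι : Type*} {s : Finset ι} {C : ι → Ideal R}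
    (hcop : (s : Set ι).Pairwise fun i j => IsCoprime (C i) (C j)) {J : Ideal R}
    (h : ∏ i ∈ s, C i ≤ J) : ⨅ i ∈ s, (J ⊔ C i) = J := by
  refine le_antisymm ?_ (le_iInf₂ fun _ _ => le_sup_left)
  have hcop' : (s : Set ι).Pairwise fun i j => IsCoprime (J ⊔ C i) (J ⊔ C j) :=
    hcop.mono' fun i j (hij : IsCoprime (C i) (C j)) => isCoprime_iff_sup_eq.mpr <|
      eq_top_iff.mpr (hij.sup_eq ▸ sup_le_sup le_sup_right le_sup_right)
  rw [← prod_eq_iInf_of_pairwise_isCoprime hcop']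
  exact (prod_sup_le_sup_prod J s C).trans (sup_le le_rfl h)

lemma isLocalRing_quotient_pow (𝔭 : Ideal R) [𝔭.IsMaximal] {n : ℕ} (hn : n ≠ 0) :
    IsLocalRing (R ⧸ 𝔭 ^ n) := by
  have : Nontrivial (R ⧸ 𝔭 ^ n) :=
    Quotient.nontrivial_iff.mpr (ne_top_of_le_ne_top ‹𝔭.IsMaximal›.ne_top (pow_le_self hn))
  refine .of_isUnit_or_isUnit_one_sub_self fun x => ?_
  obtain ⟨x, rfl⟩ := Quotient.mk_surjective x
  by_cases hx : x ∈ 𝔭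
  · refine .inr ?_
    rw [← map_one (Quotient.mk _), ← map_sub]
    exact Quotient.isUnit_mk_pow_of_notMem _ fun h =>
      ‹𝔭.IsMaximal›.ne_top ((eq_top_iff_one _).mpr (by simpa using add_mem h hx))
  · exact .inl (Quotient.isUnit_mk_pow_of_notMem _ hx)

lemma exists_forall_le_of_prime_pow_le {D : Type*} [CommRing D] [IsDedekindDomain D]
    {ι : Type*} [Nonempty ι] {𝔭 : Ideal D} (hp : Prime 𝔭) (n : ℕ) (f : ι → Ideal D)
    (hf : ∀ i, 𝔭 ^ n ≤ f i) : ∃ i₀, ∀ i, f i₀ ≤ f i := by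
  have (i : ι) : ∃ k ≤ n, f i = 𝔭 ^ k := by
    obtain ⟨k, hk, h⟩ := (dvd_prime_pow hp n).mp (dvd_iff_le.mpr (hf i))
    exact ⟨k, hk, associated_iff_eq.mp h⟩
  choose k hkn hk using this
  obtain ⟨_, ⟨i₀, rfl⟩, hmax⟩ := Set.exists_max_image (Set.range k) id
    ((Set.finite_Iic n).subset (Set.range_subset_iff.mpr hkn)) (Set.range_nonempty k)
  exact ⟨i₀, fun i => by rw [hk, hk]; exact pow_le_pow_right (hmax _ ⟨i, rfl⟩)⟩

end Ideal

namespace Matrix.SpecialLinearGroup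

variable {R S : Type*} [CommRing R] [CommRing S]

local notation "π" 𝔞 => map (Ideal.Quotient.mk 𝔞)

lemma coe_Tm (r : R) : (Tm R r : Matrix (Fin 2) (Fin 2) R) = !![1, r; 0, 1] := rfl

lemma coe_Lm (r : R) : (Lm R r : Matrix (Fin 2) (Fin 2) R) = !![1, 0; r, 1] := rfl

lemma map_Tm (f : R →+* S) (r : R) : map f (Tm R r) = Tm S (f r) := by
  ext i j; fin_cases i <;> fin_cases j <;> simp [coe_Tm, map_apply_coe]

lemma map_Lm (f : R →+* S) (r : R) : map f (Lm R r) = Lm S (f r) := by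
  ext i j; fin_cases i <;> fin_cases j <;> simp [coe_Lm, map_apply_coe]

lemma Tm_zero : Tm R 0 = 1 := by
  ext i j; fin_cases i <;> fin_cases j <;> simp [coe_Tm]

lemma Lm_neg_mul_Lm (r : R) : Lm R (-r) * Lm R r = 1 := by
  ext i j; fin_cases i <;> fin_cases j <;> simp [coe_Lm]

lemma det_eq_one_fin_two (m : SL(2, R)) : m 0 0 * m 1 1 - m 0 1 * m 1 0 = 1 := by
  rw [← Matrix.det_fin_two, m.det_coe]

lemma eq_Tm_mul_Lm_mul_Tm {m : SL(2, R)} (u : Rˣ) (hu : (u : R) = m 1 0) :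
    m = Tm R ((m 0 0 - 1) * ↑u⁻¹) * Lm R (m 1 0) * Tm R ((m 1 1 - 1) * ↑u⁻¹) := by
  have hdet := det_eq_one_fin_two m
  have hinv : m 1 0 * ↑u⁻¹ = 1 := by rw [← hu, Units.mul_inv]
  ext i j; fin_cases i <;> fin_cases j <;> simp [coe_Tm, coe_Lm]
  · linear_combination (1 - m 0 0) * hinv
  · linear_combination (-(m 0 1 + (m 0 0 - 1) * (m 1 1 - 1) * ↑u⁻¹)) * hinv - ↑u⁻¹ * hdet
  · linear_combination (1 - m 1 1) * hinv

open IsLocalRing in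
lemma closure_range_Tm_union_range_Lm [IsLocalRing R] :
    Subgroup.closure (Set.range (Tm R) ∪ Set.range (Lm R)) = ⊤ := by
  set G := Subgroup.closure (Set.range (Tm R) ∪ Set.range (Lm R))
  have hT (r : R) : Tm R r ∈ G := Subgroup.subset_closure (Or.inl ⟨r, rfl⟩)
  have hL (r : R) : Lm R r ∈ G := Subgroup.subset_closure (Or.inr ⟨r, rfl⟩)
  have of_isUnit (m : SL(2, R)) (hm : IsUnit (m 1 0)) : m ∈ G := by
    obtain ⟨u, hu⟩ := hm
    rw [eq_Tm_mul_Lm_mul_Tm u hu]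
    exact mul_mem (mul_mem (hT _) (hL _)) (hT _)
  refine eq_top_iff.mpr fun m _ => ?_
  by_cases hc : IsUnit (m 1 0)
  · exact of_isUnit m hc
  -- otherwise `m 0 0` is a unit, so adding the first row to the second makes `m 1 0` a unit
  have hc : m 1 0 ∈ maximalIdeal R := (mem_maximalIdeal _).mpr hc
  have ha : m 0 0 ∉ maximalIdeal R := fun ha => (maximalIdeal.isMaximal R).ne_top <|
    (Ideal.eq_top_iff_one _).mpr <| det_eq_one_fin_two m ▸
      sub_mem (Ideal.mul_mem_right _ _ ha) (Ideal.mul_mem_left _ _ hc)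
  rw [← one_mul m, ← Lm_neg_mul_Lm 1, mul_assoc]
  refine mul_mem (hL _) (of_isUnit _ (notMem_maximalIdeal.mp fun h => ha ?_))
  have h10 : (Lm R 1 * m) 1 0 = m 0 0 + m 1 0 := by simp [coe_Lm, Matrix.mul_apply]
  rw [h10] at h
  simpa using sub_mem h hc

lemma map_mk_eq_map_mk_iff {𝔞 : Ideal R} {g h : SL(2, R)} :
    (π 𝔞) g = (π 𝔞) h ↔ ∀ i j, g i j - h i j ∈ 𝔞 := by
  simp [SpecialLinearGroup.ext_iff, map_apply_coe, Ideal.Quotient.eq]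

lemma mem_SLmod_iff {𝔞 : Ideal R} {g : SL(2, R)} :
    g ∈ SLmod R 𝔞 ↔ ∀ i j, g i j - (1 : SL(2, R)) i j ∈ 𝔞 := by
  rw [SLmod, MonoidHom.mem_ker, ← map_one (π 𝔞), map_mk_eq_map_mk_iff]

instance (𝔞 : Ideal R) : (SLmod R 𝔞).Normal := MonoidHom.normal_ker _

lemma SLmod_mono {𝔞 𝔟 : Ideal R} (h : 𝔞 ≤ 𝔟) : SLmod R 𝔞 ≤ SLmod R 𝔟 :=
  fun _ hg => mem_SLmod_iff.mpr fun i j => h (mem_SLmod_iff.mp hg i j)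

lemma Tm_mem_SLmod {𝔞 : Ideal R} {r : R} (hr : r ∈ 𝔞) : Tm R r ∈ SLmod R 𝔞 := by
  rw [SLmod, MonoidHom.mem_ker, map_Tm, Ideal.Quotient.eq_zero_iff_mem.mpr hr, Tm_zero]

lemma exists_mem_SLmod_map_eq {𝔞 𝔟 : Ideal R} (h : 𝔞 ⊔ 𝔟 = ⊤) [IsLocalRing (R ⧸ 𝔟)]
    (m : SL(2, R)) : ∃ w ∈ SLmod R 𝔞, (π 𝔟) w = (π 𝔟) m := by
  have hsurj : (SLmod R 𝔞).map (π 𝔟) = ⊤ := by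
    rw [eq_top_iff, ← closure_range_Tm_union_range_Lm, Subgroup.closure_le]
    have lift (r : R ⧸ 𝔟) : ∃ a ∈ 𝔞, Ideal.Quotient.mk 𝔟 a = r := by
      obtain ⟨s, rfl⟩ := Ideal.Quotient.mk_surjective r
      obtain ⟨a, ha, b, hb, rfl⟩ := Submodule.mem_sup.mp (h ▸ Submodule.mem_top : s ∈ 𝔞 ⊔ 𝔟)
      exact ⟨a, ha, by rw [map_add, Ideal.Quotient.eq_zero_iff_mem.mpr hb, add_zero]⟩
    rintro _ (⟨r, rfl⟩ | ⟨r, rfl⟩) <;> obtain ⟨a, ha, rfl⟩ := lift r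
    · exact ⟨Tm R a, Tm_mem_SLmod ha, map_Tm _ a⟩
    · refine ⟨Lm R a, mem_SLmod_iff.mpr fun i j => ?_, map_Lm _ a⟩
      fin_cases i <;> fin_cases j <;> simp [coe_Lm, ha]
  obtain ⟨w, hw, hwm⟩ := hsurj ▸ Subgroup.mem_top ((π 𝔟) m)
  exact ⟨w, hw, hwm⟩

lemma exists_map_mk_eq_of_pairwise_isCoprime {ι : Type*} {s : Finset ι} {C : ι → Ideal R}
    (hcop : (s : Set ι).Pairwise fun i j => IsCoprime (C i) (C j))
    (hloc : ∀ i ∈ s, IsLocalRing (R ⧸ C i)) (g : ι → SL(2, R)) :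
    ∃ g₀ : SL(2, R), ∀ i ∈ s, (π C i) g₀ = (π C i) (g i) := by
  classical
  induction s using Finset.induction_on with
  | empty => exact ⟨1, by simp⟩
  | insert a s ha ih =>
    rw [Finset.coe_insert, Set.pairwise_insert] at hcop
    obtain ⟨g', hg'⟩ := ih hcop.1 fun i hi => hloc i (Finset.mem_insert_of_mem hi)
    have hsup : (∏ i ∈ s, C i) ⊔ C a = ⊤ := Ideal.prod_sup_eq_top fun i hi =>
      ((hcop.2 i hi (ne_of_mem_of_not_mem hi ha).symm).2).sup_eq
    have := hloc a (Finset.mem_insert_self a s)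
    obtain ⟨w, hw, hwg⟩ := exists_mem_SLmod_map_eq hsup (g a * g'⁻¹)
    refine ⟨w * g', fun i hi => ?_⟩
    rcases Finset.mem_insert.mp hi with rfl | hi
    · rw [map_mul, hwg, map_mul, map_inv, inv_mul_cancel_right]
    · have hw1 : (π C i) w = 1 := SLmod_mono (Ideal.le_of_dvd (Finset.dvd_prod_of_mem C hi)) hw
      rw [map_mul, hw1, one_mul, hg' i hi]

lemma map_mk_mul_Tm_eq {𝔞 𝔫 : Ideal R} {u : SL(2, R)} (hu : u ∈ SLmod R 𝔞) {x : R}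
    (hx : ∀ a ∈ 𝔞, x * a ∈ 𝔫) : (π 𝔫) (u * Tm R x) = (π 𝔫) (Tm R x * u) := by
  rw [map_mk_eq_map_mk_iff]
  have hu := mem_SLmod_iff.mp hu
  have h10 : u 1 0 ∈ 𝔞 := by simpa using hu 1 0
  have hdiag : u 0 0 - u 1 1 ∈ 𝔞 := by simpa using sub_mem (hu 0 0) (hu 1 1)
  intro i j
  fin_cases i <;> fin_cases j <;> simp [coe_Tm, Matrix.mul_apply]
  · exact hx _ h10
  · convert hx _ hdiag using 1; ring
  · exact mul_comm x (u 1 0) ▸ hx _ h10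

lemma conj_Tm_mem_of_map_mk_eq {H : Subgroup SL(2, R)} {𝔞 𝔫 : Ideal R} (h𝔫 : SLmod R 𝔫 ≤ H)
    {x : R} (hx : ∀ a ∈ 𝔞, x * a ∈ 𝔫) {g g' : SL(2, R)} (hg : (π 𝔞) g = (π 𝔞) g')
    (h : g * Tm R x * g⁻¹ ∈ H) : g' * Tm R x * g'⁻¹ ∈ H := by
  set u := g⁻¹ * g'
  have hu : u ∈ SLmod R 𝔞 := by
    rw [SLmod, MonoidHom.mem_ker, map_mul, map_inv, hg, inv_mul_cancel]
  have hcomm : (Tm R x)⁻¹ * (u * Tm R x) * u⁻¹ ∈ SLmod R 𝔫 := by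
    rw [SLmod, MonoidHom.mem_ker, map_mul, map_mul, map_mk_mul_Tm_eq hu hx, map_mul,
      map_inv, map_inv]
    group
  have hfactor : g' * Tm R x * g'⁻¹
      = (g * Tm R x * g⁻¹) * (g * ((Tm R x)⁻¹ * (u * Tm R x) * u⁻¹) * g⁻¹) := by
    simp only [u]; group
  rw [hfactor]
  exact H.mul_mem h (h𝔫 (Subgroup.Normal.conj_mem inferInstance _ hcomm g))

end Matrix.SpecialLinearGroup

section CuspAmplitude

open Matrix.SpecialLinearGroup

variable {R : Type*} [CommRing R] {H : Subgroup SL(2, R)}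

lemma IsCuspAmplitude.le_of_SLmod_le {g : SL(2, R)} {c 𝔫 : Ideal R} (hc : IsCuspAmplitude H g c)
    (h𝔫 : SLmod R 𝔫 ≤ H) : 𝔫 ≤ c :=
  hc.2 𝔫 fun _ hx => h𝔫 (Subgroup.Normal.conj_mem inferInstance _ (Tm_mem_SLmod hx) g)

lemma IsCuspAmplitude.inf_le {g g' : SL(2, R)} {c c' 𝔞 𝔟 𝔫 : Ideal R}
    (hc : IsCuspAmplitude H g c) (hc' : IsCuspAmplitude H g' c') (h𝔫 : SLmod R 𝔫 ≤ H)
    (h𝔟 : 𝔟 * 𝔞 ≤ 𝔫) (hg : map (Ideal.Quotient.mk 𝔞) g = map (Ideal.Quotient.mk 𝔞) g') :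
    c ⊓ 𝔟 ≤ c' :=
  hc'.2 _ fun x hx => conj_Tm_mem_of_map_mk_eq h𝔫
    (fun _ ha => h𝔟 (Ideal.mul_mem_mul hx.2 ha)) hg (hc.1 x hx.1)

lemma IsLevel.eq_iInf {q : Ideal R} (hq : IsLevel H q) {c : SL(2, R) → Ideal R}
    (hc : ∀ g, IsCuspAmplitude H g (c g)) : q = ⨅ g, c g :=
  le_antisymm (le_iInf fun g => (hc g).2 q fun r hr => hq.1 r hr g)
    (hq.2 _ fun r hr g => (hc g).1 r (Ideal.mem_iInf.mp hr g))

lemma exists_cuspAmplitude_le_of_prod_le {ι : Type*} {s : Finset ι} {C : ι → Ideal R}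
    (hcop : (s : Set ι).Pairwise fun i j => IsCoprime (C i) (C j))
    (hloc : ∀ i ∈ s, IsLocalRing (R ⧸ C i)) (hH : SLmod R (∏ i ∈ s, C i) ≤ H)
    {c : SL(2, R) → Ideal R} (hc : ∀ g, IsCuspAmplitude H g (c g))
    (hmin : ∀ i ∈ s, ∃ gᵢ, ∀ g, c gᵢ ⊔ C i ≤ c g ⊔ C i) :
    ∃ g₀, ∀ g, c g₀ ≤ c g := by
  classical
  choose! gmin hgmin using hmin
  obtain ⟨g₀, hg₀⟩ := exists_map_mk_eq_of_pairwise_isCoprime hcop hloc gmin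
  have hle_gmin : ∀ i ∈ s, c g₀ ⊔ C i ≤ c (gmin i) ⊔ C i := by
    intro i hi
    have hsup : (∏ j ∈ s.erase i, C j) ⊔ C i = ⊤ := Ideal.prod_sup_eq_top fun j hj =>
      (hcop (Finset.mem_of_mem_erase hj) hi (Finset.ne_of_mem_erase hj)).sup_eq
    have hinf : c g₀ ⊓ ∏ j ∈ s.erase i, C j ≤ c (gmin i) :=
      (hc g₀).inf_le (hc (gmin i)) hH (Finset.prod_erase_mul s C hi).le (hg₀ i hi)
    rw [← Ideal.mul_sup_eq_of_coprime_right hsup]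
    exact sup_le_sup_right (Ideal.mul_le_inf.trans hinf) _
  refine ⟨g₀, fun g => ?_⟩
  calc c g₀ ≤ ⨅ i ∈ s, (c g₀ ⊔ C i) := le_iInf₂ fun _ _ => le_sup_left
    _ ≤ ⨅ i ∈ s, (c g ⊔ C i) := iInf₂_mono fun i hi => (hle_gmin i hi).trans (hgmin i hi g)
    _ = c g := Ideal.biInf_sup_eq_of_prod_le hcop ((hc g).le_of_SLmod_le hH)

open UniqueFactorizationMonoid in
lemma IsCongruence.exists_cuspAmplitude_le [IsDedekindDomain R] (hH : IsCongruence H)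
    {c : SL(2, R) → Ideal R} (hc : ∀ g, IsCuspAmplitude H g (c g)) : ∃ g₀, ∀ g, c g₀ ≤ c g := by
  classical
  obtain ⟨𝔫, h𝔫, hH⟩ := hH
  set T := (normalizedFactors 𝔫).toFinset
  have hprime : ∀ 𝔭 ∈ T, Prime 𝔭 := fun 𝔭 h =>
    prime_of_normalized_factor 𝔭 (Multiset.mem_toFinset.mp h)
  have hmax : ∀ 𝔭 ∈ T, 𝔭.IsMaximal := fun 𝔭 h =>
    (Ideal.isPrime_of_prime (hprime 𝔭 h)).isMaximal (hprime 𝔭 h).ne_zero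
  have hprod : ∏ 𝔭 ∈ T, 𝔭 ^ (normalizedFactors 𝔫).count 𝔭 = 𝔫 := by
    rw [← Finset.prod_multiset_count, Ideal.prod_normalizedFactors_eq_self h𝔫]
  refine exists_cuspAmplitude_le_of_prod_le (s := T) ?_ ?_ (hprod ▸ hH) hc fun 𝔭 h𝔭 =>
    Ideal.exists_forall_le_of_prime_pow_le (hprime 𝔭 h𝔭) _ _ fun _ => le_sup_right
  · intro 𝔭 h𝔭 𝔮 h𝔮 hne
    have := hmax 𝔭 h𝔭
    have := hmax 𝔮 h𝔮
    exact (Ideal.isCoprime_of_isMaximal hne).pow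
  · intro 𝔭 h𝔭
    have := hmax 𝔭 h𝔭
    exact Ideal.isLocalRing_quotient_pow 𝔭
      (Multiset.count_ne_zero.mpr (Multiset.mem_toFinset.mp h𝔭))

end CuspAmplitude

theorem statement8_general {D : Type*} [CommRing D] [IsDedekindDomain D]
    (H : Subgroup (Matrix.SpecialLinearGroup (Fin 2) D)) (hH : IsCongruence H)
    (q : Ideal D) (hq : IsLevel H q)
    (c : Matrix.SpecialLinearGroup (Fin 2) D → Ideal D)
    (hc : ∀ g, IsCuspAmplitude H g (c g)) :
    ∃ g₀ : Matrix.SpecialLinearGroup (Fin 2) D,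
      (∀ g, c g₀ ≤ c g) ∧ (⨅ g, c g) = c g₀ ∧ c g₀ = q := by
  obtain ⟨g₀, hg₀⟩ := hH.exists_cuspAmplitude_le hc
  have hinf : (⨅ g, c g) = c g₀ := le_antisymm (iInf_le c g₀) (le_iInf hg₀)
  exact ⟨g₀, hg₀, hinf, by rw [hq.eq_iInf hc, hinf]⟩

/-- Theorem 2.10 and Corollary 2.11. Let `H` be a congruence subgroup of
`SL₂(D)` with level `q` and let `c g` denote the cusp amplitude of `H` at `g`. Then there
is `g₀` with `c g₀ ≤ c g` for all `g`; consequently the intersection of all cusp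
amplitudes equals `c g₀` and is itself a cusp amplitude; in particular the level `q` is a
cusp amplitude of `H`. -/
theorem statement8 {D : Type*} [CommRing D] [IsDomain D] [IsDedekindDomain D]
    (H : Subgroup (Matrix.SpecialLinearGroup (Fin 2) D)) (hH : IsCongruence H)
    (q : Ideal D) (hq : IsLevel H q)
    (c : Matrix.SpecialLinearGroup (Fin 2) D → Ideal D)
    (hc : ∀ g, IsCuspAmplitude H g (c g)) :
    ∃ g₀ : Matrix.SpecialLinearGroup (Fin 2) D,
      (∀ g, c g₀ ≤ c g) ∧ (⨅ g, c g) = c g₀ ∧ c g₀ = q :=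
  statement8_general H hH q hq c hc
end

section
/- Let D be a Dedekind domain and N a normal congruence subgroup of G = SL₂(D) of level 𝔮 = 𝔮₁·𝔮₂, where 𝔮₁ + 𝔮₂ = D. Let N₀ = (N ∩ SL₂(D,𝔮₁))·SL₂(D,𝔮₂) and N̄ = N·SL₂(D,𝔮₂). Then the commutator subgroup [G, N̄] is contained in N₀; equivalently, N̄/N₀ is a central subgroup of G/N₀. -/
open Matrix Pointwise

/-- For a normal subgroup `N`, `q` is the level of `N`: the largest ideal `q` such that
`T(r) ∈ N` for all `r ∈ q`. -/
def IsNormalLevel {R : Type*} [CommRing R]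
    (N : Subgroup (Matrix.SpecialLinearGroup (Fin 2) R)) (q : Ideal R) : Prop :=
  (∀ r ∈ q, Tm R r ∈ N) ∧ ∀ I : Ideal R, (∀ r ∈ I, Tm R r ∈ N) → I ≤ q

section Aux

variable {D : Type*} [CommRing D]

/-- Entrywise congruence of matrices mod an ideal. -/
def matCong (J : Ideal D) (X Y : Matrix (Fin 2) (Fin 2) D) : Prop :=
  ∀ i j, X i j - Y i j ∈ J

lemma matCong_refl (J : Ideal D) (X : Matrix (Fin 2) (Fin 2) D) : matCong J X X := by
  intro i j; simp

lemma matCong_trans {J : Ideal D} {X Y Z : Matrix (Fin 2) (Fin 2) D}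
    (h1 : matCong J X Y) (h2 : matCong J Y Z) : matCong J X Z := by
  intro i j
  have : X i j - Z i j = (X i j - Y i j) + (Y i j - Z i j) := by ring
  rw [this]; exact J.add_mem (h1 i j) (h2 i j)

lemma matCong_mul {J : Ideal D} {X X' Y Y' : Matrix (Fin 2) (Fin 2) D}
    (h1 : matCong J X X') (h2 : matCong J Y Y') : matCong J (X * Y) (X' * Y') := by
  intro i j
  rw [Matrix.mul_apply, Matrix.mul_apply, ← Finset.sum_sub_distrib]
  refine Submodule.sum_mem _ fun k _ => ?_
  have : X i k * Y k j - X' i k * Y' k j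
      = (X i k - X' i k) * Y k j + X' i k * (Y k j - Y' k j) := by ring
  rw [this]
  exact J.add_mem (J.mul_mem_right _ (h1 i k)) (J.mul_mem_left _ (h2 k j))

lemma slmod_cong {q : Ideal D} {g h : Matrix.SpecialLinearGroup (Fin 2) D}
    (H : matCong q (h : Matrix (Fin 2) (Fin 2) D) (g : Matrix (Fin 2) (Fin 2) D)) :
    g⁻¹ * h ∈ SLmod D q := by
  have key : Matrix.SpecialLinearGroup.map (Ideal.Quotient.mk q) h
      = Matrix.SpecialLinearGroup.map (Ideal.Quotient.mk q) g := by
    apply Matrix.SpecialLinearGroup.ext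
    intro i j
    show Ideal.Quotient.mk q ((h : Matrix (Fin 2) (Fin 2) D) i j)
      = Ideal.Quotient.mk q ((g : Matrix (Fin 2) (Fin 2) D) i j)
    exact (Ideal.Quotient.mk_eq_mk_iff_sub_mem _ _).mpr (H i j)
  rw [SLmod, MonoidHom.mem_ker, MonoidHom.map_mul, MonoidHom.map_inv, key, inv_mul_cancel]

lemma slmod_cong_one {q : Ideal D} {h : Matrix.SpecialLinearGroup (Fin 2) D}
    (H : matCong q (h : Matrix (Fin 2) (Fin 2) D) (1 : Matrix (Fin 2) (Fin 2) D)) :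
    h ∈ SLmod D q := by
  have := slmod_cong (g := 1) (h := h) (by simpa using H)
  simpa using this

end Aux

section Dedekind

variable {D : Type*} [CommRing D] [IsDomain D] [IsDedekindDomain D]

omit [IsDomain D] in
lemma exists_good_t (J : Ideal D) (hJ : J ≠ ⊥) (a c : D)
    (hum : ∀ m : Ideal D, m.IsMaximal → J ≤ m → a ∉ m ∨ c ∉ m) :
    ∃ t : D, ∀ m : Ideal D, m.IsMaximal → J ≤ m → a + t * c ∉ m := by
  classical
  have hfin : {m : Ideal D | m.IsMaximal ∧ J ≤ m}.Finite := by
    haveI := UniqueFactorizationMonoid.fintypeSubtypeDvd J hJ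
    apply Set.Finite.subset (Set.finite_range (fun x : {x : Ideal D // x ∣ J} => (x : Ideal D)))
    rintro m ⟨hm, hJm⟩
    exact ⟨⟨m, (Ideal.dvd_iff_le).mpr hJm⟩, rfl⟩
  obtain ⟨t, ht⟩ := IsDedekindDomain.exists_forall_sub_mem_ideal (s := hfin.toFinset)
      id (fun _ => 1)
      (fun m hm => by
        rw [Set.Finite.mem_toFinset] at hm
        refine Ideal.prime_of_isPrime ?_ hm.1.isPrime
        rintro rfl
        exact hJ (le_bot_iff.mp hm.2))
      (fun i _ j _ hij => hij)
      (fun m => if a ∈ (m : Ideal D) then 1 else 0)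
  refine ⟨t, fun m hmmax hJm => ?_⟩
  have hms : m ∈ hfin.toFinset := by rw [Set.Finite.mem_toFinset]; exact ⟨hmmax, hJm⟩
  have hsub := ht m hms
  rw [id, pow_one] at hsub
  by_cases ha : a ∈ m
  · simp only [ha, if_true] at hsub
    have hc : c ∉ m := (hum m hmmax hJm).resolve_left (fun h => h ha)
    intro habs
    apply hc
    have : c = ((a + t * c) - a) - (t - 1) * c := by ring
    rw [this]
    exact m.sub_mem (m.sub_mem habs ha) (m.mul_mem_right _ hsub)
  · simp only [ha, if_false, sub_zero] at hsub
    intro habs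
    apply ha
    have : a = (a + t * c) - t * c := by ring
    rw [this]
    exact m.sub_mem habs (m.mul_mem_right _ hsub)

lemma lift_SL2 (J : Ideal D) (a b c d : D)
    (hdet : a * d - b * c - 1 ∈ J)
    (hum : ∀ m : Ideal D, m.IsMaximal → J ≤ m → a ∉ m ∨ c ∉ m) :
    ∃ M : Matrix.SpecialLinearGroup (Fin 2) D,
      matCong J (M : Matrix (Fin 2) (Fin 2) D) !![a, b; c, d] := by
  rcases eq_or_ne J ⊥ with rfl | hJ
  · have h0 : a * d - b * c - 1 = 0 := by simpa using hdet
    refine ⟨⟨!![a, b; c, d], by rw [Matrix.det_fin_two_of]; linear_combination h0⟩, ?_⟩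
    intro i j; simp
  · obtain ⟨t, ht⟩ := exists_good_t J hJ a c hum
    set u : D := a + t * c with hu
    set b' : D := b + t * d with hb'
    have hspan : Ideal.span {u} ⊔ J = ⊤ := by
      by_contra hne
      obtain ⟨m, hmmax, hle⟩ := Ideal.exists_le_maximal _ hne
      exact ht m hmmax (le_trans le_sup_right hle)
        (hle (Ideal.mem_sup_left (Ideal.mem_span_singleton_self u)))
    obtain ⟨y, hy, z, hz, hyz⟩ := Submodule.mem_sup.mp
      (by rw [hspan]; exact Submodule.mem_top : (1 : D) ∈ Ideal.span {u} ⊔ J)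
    obtain ⟨v, hv⟩ := Ideal.mem_span_singleton'.mp hy
    have he : u * v - 1 ∈ J := by
      have : u * v - 1 = -z := by linear_combination hv + hyz
      rw [this]; exact J.neg_mem hz
    set T : D → Matrix.SpecialLinearGroup (Fin 2) D :=
      fun x => ⟨!![1, x; 0, 1], by simp [Matrix.det_fin_two_of]⟩ with hT
    set Tl : D → Matrix.SpecialLinearGroup (Fin 2) D :=
      fun x => ⟨!![1, 0; x, 1], by simp [Matrix.det_fin_two_of]⟩ with hTl
    set Dg : Matrix.SpecialLinearGroup (Fin 2) D :=
      ⟨!![2*u - u^2*v, u*v - 1; 1 - u*v, v], by rw [Matrix.det_fin_two_of]; ring⟩ with hDg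
    refine ⟨T (-t) * (Tl (c*v) * (Dg * T (v * b'))), ?_⟩
    simp only [Matrix.SpecialLinearGroup.coe_mul]
    have hDgCong : matCong J (Dg : Matrix (Fin 2) (Fin 2) D) !![u, 0; 0, v] := by
      intro i j
      fin_cases i <;> fin_cases j <;> simp [hDg]
      · have : 2*u - u^2*v - u = (-u) * (u*v - 1) := by ring
        rw [this]; exact J.mul_mem_left _ he
      · exact he
      · have : 1 - u*v = -(u*v - 1) := by ring
        rw [this]; exact J.neg_mem he
    have step1 : matCong J
        ((T (-t) : Matrix (Fin 2) (Fin 2) D) * ((Tl (c*v) : Matrix (Fin 2) (Fin 2) D) *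
          ((Dg : Matrix (Fin 2) (Fin 2) D) * (T (v * b') : Matrix (Fin 2) (Fin 2) D))))
        ((T (-t) : Matrix (Fin 2) (Fin 2) D) * ((Tl (c*v) : Matrix (Fin 2) (Fin 2) D) *
          (!![u, 0; 0, v] * (T (v * b') : Matrix (Fin 2) (Fin 2) D)))) :=
      matCong_mul (matCong_refl _ _)
        (matCong_mul (matCong_refl _ _) (matCong_mul hDgCong (matCong_refl _ _)))
    refine matCong_trans step1 ?_
    have hKeq : ((T (-t) : Matrix (Fin 2) (Fin 2) D) * ((Tl (c*v) : Matrix (Fin 2) (Fin 2) D) *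
          (!![u, 0; 0, v] * (T (v * b') : Matrix (Fin 2) (Fin 2) D))))
        = !![u - t*c*u*v, u*v*b' - t*(c*v*u*v*b' + v); c*u*v, c*v*u*v*b' + v] := by
      show (!![1, -t; 0, 1] : Matrix (Fin 2) (Fin 2) D) * (!![1, 0; c*v, 1] *
          (!![u, 0; 0, v] * !![1, v*b'; 0, 1])) = _
      ext i j
      fin_cases i <;> fin_cases j <;>
        simp [Matrix.mul_apply, Fin.sum_univ_two] <;> ring
    rw [hKeq]
    intro i j
    fin_cases i <;> fin_cases j <;> simp
    · have : u - t*c*u*v - a = (-(t*c)) * (u*v - 1) := by rw [hu]; ring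
      rw [this]; exact J.mul_mem_left _ he
    · have : u*v*b' - t*(c*v*u*v*b' + v) - b
          = (b'*(1 - t*c*v) - t*d) * (u*v - 1) + (t*v) * (a*d - b*c - 1) := by
        rw [hu, hb']; ring
      rw [this]; exact J.add_mem (J.mul_mem_left _ he) (J.mul_mem_left _ hdet)
    · have : c*u*v - c = c * (u*v - 1) := by ring
      rw [this]; exact J.mul_mem_left _ he
    · have : c*v*u*v*b' + v - d = (d + c*v*b') * (u*v - 1) + (-v) * (a*d - b*c - 1) := by
        rw [hu, hb']; ring
      rw [this]; exact J.add_mem (J.mul_mem_left _ he) (J.mul_mem_left _ hdet)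

/-- The key approximation: given coprime `q₁`, `q₂`, every `g ∈ SL₂(D)` is congruent
mod `q₂` to an element of the principal congruence subgroup of level `q₁`. -/
lemma exists_approx (q₁ q₂ : Ideal D) (hco : q₁ ⊔ q₂ = ⊤)
    (g : Matrix.SpecialLinearGroup (Fin 2) D) :
    ∃ h : Matrix.SpecialLinearGroup (Fin 2) D,
      h ∈ SLmod D q₁ ∧ g⁻¹ * h ∈ SLmod D q₂ := by
  obtain ⟨e₁, he₁, e₂, he₂, hee⟩ := Submodule.mem_sup.mp
    (show (1 : D) ∈ q₁ ⊔ q₂ by rw [hco]; exact Submodule.mem_top)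
  set ga := (g : Matrix (Fin 2) (Fin 2) D) 0 0 with hga
  set gb := (g : Matrix (Fin 2) (Fin 2) D) 0 1 with hgb
  set gc := (g : Matrix (Fin 2) (Fin 2) D) 1 0 with hgc
  set gd := (g : Matrix (Fin 2) (Fin 2) D) 1 1 with hgd
  have hdetg : ga * gd - gb * gc = 1 := by
    have := g.property
    rw [Matrix.det_fin_two] at this
    exact this
  set a₀ : D := e₂ + e₁ * ga with ha₀
  set b₀ : D := e₁ * gb with hb₀
  set c₀ : D := e₁ * gc with hc₀
  set d₀ : D := e₂ + e₁ * gd with hd₀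
  -- congruences mod q₁ (to the identity)
  have ha1 : a₀ - 1 ∈ q₁ := by
    have : a₀ - 1 = e₁ * (ga - 1) := by rw [ha₀]; linear_combination hee
    rw [this]; exact q₁.mul_mem_right _ he₁
  have hb1 : b₀ ∈ q₁ := q₁.mul_mem_right _ he₁
  have hc1 : c₀ ∈ q₁ := q₁.mul_mem_right _ he₁
  have hd1 : d₀ - 1 ∈ q₁ := by
    have : d₀ - 1 = e₁ * (gd - 1) := by rw [hd₀]; linear_combination hee
    rw [this]; exact q₁.mul_mem_right _ he₁
  -- congruences mod q₂ (to g)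
  have ha2 : a₀ - ga ∈ q₂ := by
    have : a₀ - ga = e₂ * (1 - ga) := by rw [ha₀]; linear_combination ga * hee
    rw [this]; exact q₂.mul_mem_right _ he₂
  have hb2 : b₀ - gb ∈ q₂ := by
    have : b₀ - gb = e₂ * (-gb) := by rw [hb₀]; linear_combination gb * hee
    rw [this]; exact q₂.mul_mem_right _ he₂
  have hc2 : c₀ - gc ∈ q₂ := by
    have : c₀ - gc = e₂ * (-gc) := by rw [hc₀]; linear_combination gc * hee
    rw [this]; exact q₂.mul_mem_right _ he₂
  have hd2 : d₀ - gd ∈ q₂ := by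
    have : d₀ - gd = e₂ * (1 - gd) := by rw [hd₀]; linear_combination gd * hee
    rw [this]; exact q₂.mul_mem_right _ he₂
  -- determinant congruence mod J = q₁ ⊓ q₂
  have hdet : a₀ * d₀ - b₀ * c₀ - 1 ∈ q₁ ⊓ q₂ := by
    constructor
    · have : a₀ * d₀ - b₀ * c₀ - 1 = (a₀ - 1) * d₀ + (d₀ - 1) - b₀ * c₀ := by ring
      rw [this]
      exact q₁.sub_mem (q₁.add_mem (q₁.mul_mem_right _ ha1) hd1) (q₁.mul_mem_right _ hb1)
    · have : a₀ * d₀ - b₀ * c₀ - 1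
          = (a₀ - ga) * d₀ + ga * (d₀ - gd) - (b₀ - gb) * c₀ - gb * (c₀ - gc) := by
        linear_combination hdetg
      rw [this]
      exact q₂.sub_mem (q₂.sub_mem (q₂.add_mem (q₂.mul_mem_right _ ha2) (q₂.mul_mem_left _ hd2))
        (q₂.mul_mem_right _ hb2)) (q₂.mul_mem_left _ hc2)
  -- unimodularity of the first column mod J
  have hum : ∀ m : Ideal D, m.IsMaximal → q₁ ⊓ q₂ ≤ m → a₀ ∉ m ∨ c₀ ∉ m := by
    intro m hmax hle
    by_contra hcon
    push_neg at hcon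
    obtain ⟨ham, hcm⟩ := hcon
    have hone : (1 : D) ∈ m := by
      rcases hmax.isPrime.inf_le.mp hle with h1 | h2
      · have : (1 : D) = a₀ - (a₀ - 1) := by ring
        rw [this]; exact m.sub_mem ham (h1 ha1)
      · have hgam : ga ∈ m := by
          have : ga = a₀ - (a₀ - ga) := by ring
          rw [this]; exact m.sub_mem ham (h2 ha2)
        have hgcm : gc ∈ m := by
          have : gc = c₀ - (c₀ - gc) := by ring
          rw [this]; exact m.sub_mem hcm (h2 hc2)
        rw [← hdetg]
        exact m.sub_mem (m.mul_mem_right _ hgam) (m.mul_mem_left _ hgcm)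
    exact hmax.ne_top ((Ideal.eq_top_iff_one m).mpr hone)
  obtain ⟨M, hM⟩ := lift_SL2 (q₁ ⊓ q₂) a₀ b₀ c₀ d₀ hdet hum
  have hM00 : (M : Matrix (Fin 2) (Fin 2) D) 0 0 - a₀ ∈ q₁ ⊓ q₂ := by simpa using hM 0 0
  have hM01 : (M : Matrix (Fin 2) (Fin 2) D) 0 1 - b₀ ∈ q₁ ⊓ q₂ := by simpa using hM 0 1
  have hM10 : (M : Matrix (Fin 2) (Fin 2) D) 1 0 - c₀ ∈ q₁ ⊓ q₂ := by simpa using hM 1 0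
  have hM11 : (M : Matrix (Fin 2) (Fin 2) D) 1 1 - d₀ ∈ q₁ ⊓ q₂ := by simpa using hM 1 1
  refine ⟨M, ?_, ?_⟩
  · apply slmod_cong_one
    intro i j
    fin_cases i <;> fin_cases j <;> simp [Matrix.one_apply]
    · have : (M : Matrix (Fin 2) (Fin 2) D) 0 0 - 1
          = ((M : Matrix (Fin 2) (Fin 2) D) 0 0 - a₀) + (a₀ - 1) := by ring
      rw [this]; exact q₁.add_mem (Submodule.mem_inf.mp hM00).1 ha1
    · have : (M : Matrix (Fin 2) (Fin 2) D) 0 1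
          = ((M : Matrix (Fin 2) (Fin 2) D) 0 1 - b₀) + b₀ := by ring
      rw [this]; exact q₁.add_mem (Submodule.mem_inf.mp hM01).1 hb1
    · have : (M : Matrix (Fin 2) (Fin 2) D) 1 0
          = ((M : Matrix (Fin 2) (Fin 2) D) 1 0 - c₀) + c₀ := by ring
      rw [this]; exact q₁.add_mem (Submodule.mem_inf.mp hM10).1 hc1
    · have : (M : Matrix (Fin 2) (Fin 2) D) 1 1 - 1
          = ((M : Matrix (Fin 2) (Fin 2) D) 1 1 - d₀) + (d₀ - 1) := by ring
      rw [this]; exact q₁.add_mem (Submodule.mem_inf.mp hM11).1 hd1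
  · apply slmod_cong
    intro i j
    fin_cases i <;> fin_cases j <;> simp
    · have : (M : Matrix (Fin 2) (Fin 2) D) 0 0 - ga
          = ((M : Matrix (Fin 2) (Fin 2) D) 0 0 - a₀) + (a₀ - ga) := by ring
      rw [this]; exact q₂.add_mem (Submodule.mem_inf.mp hM00).2 ha2
    · have : (M : Matrix (Fin 2) (Fin 2) D) 0 1 - gb
          = ((M : Matrix (Fin 2) (Fin 2) D) 0 1 - b₀) + (b₀ - gb) := by ring
      rw [this]; exact q₂.add_mem (Submodule.mem_inf.mp hM01).2 hb2
    · have : (M : Matrix (Fin 2) (Fin 2) D) 1 0 - gc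
          = ((M : Matrix (Fin 2) (Fin 2) D) 1 0 - c₀) + (c₀ - gc) := by ring
      rw [this]; exact q₂.add_mem (Submodule.mem_inf.mp hM10).2 hc2
    · have : (M : Matrix (Fin 2) (Fin 2) D) 1 1 - gd
          = ((M : Matrix (Fin 2) (Fin 2) D) 1 1 - d₀) + (d₀ - gd) := by ring
      rw [this]; exact q₂.add_mem (Submodule.mem_inf.mp hM11).2 hd2

end Dedekind

/-- Lemma 4.4. Let `N` be a normal congruence subgroup of
`G = SL₂(D)` of level `q₁·q₂` with `q₁ + q₂ = D`. Set
`N₀ = (N ∩ SL₂(D,q₁)) · SL₂(D,q₂)` and `N̄ = N · SL₂(D,q₂)`. Then `[G, N̄] ≤ N₀`,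
i.e. `N̄/N₀` is central in `G/N₀`. -/
theorem statement12 {D : Type*} [CommRing D] [IsDomain D] [IsDedekindDomain D]
    (N : Subgroup (Matrix.SpecialLinearGroup (Fin 2) D)) (hNn : N.Normal)
    (hN : IsCongruence N)
    (q₁ q₂ : Ideal D) (hlevel : IsNormalLevel N (q₁ * q₂)) (hco : q₁ ⊔ q₂ = ⊤) :
    ∀ g : Matrix.SpecialLinearGroup (Fin 2) D, ∀ n ∈ N ⊔ SLmod D q₂,
      g * n * g⁻¹ * n⁻¹ ∈ (N ⊓ SLmod D q₁) ⊔ SLmod D q₂ := by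
  haveI hK : (SLmod D q₂).Normal := MonoidHom.normal_ker _
  haveI hK1 : (SLmod D q₁).Normal := MonoidHom.normal_ker _
  intro g n hn
  have hn' : n ∈ ((N : Set (Matrix.SpecialLinearGroup (Fin 2) D)) * (SLmod D q₂ : Set (Matrix.SpecialLinearGroup (Fin 2) D))) := by
    rw [← Subgroup.mul_normal]
    exact hn
  obtain ⟨m, hm, k, hk, rfl⟩ := hn'
  -- the commutator with `k` lands in `SLmod q₂`
  have hck : g * k * g⁻¹ * k⁻¹ ∈ SLmod D q₂ :=
    (SLmod D q₂).mul_mem (hK.conj_mem k hk g) (Subgroup.inv_mem _ hk)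
  have hck' : m * (g * k * g⁻¹ * k⁻¹) * m⁻¹ ∈ SLmod D q₂ := hK.conj_mem _ hck m
  -- the commutator with `m`
  have hcm : g * m * g⁻¹ * m⁻¹ ∈ (N ⊓ SLmod D q₁) ⊔ SLmod D q₂ := by
    obtain ⟨h, hh1, hh2⟩ := exists_approx q₁ q₂ hco g
    -- z = [h, m] ∈ N ⊓ SLmod q₁
    have hz : h * m * h⁻¹ * m⁻¹ ∈ N ⊓ SLmod D q₁ := by
      constructor
      · exact N.mul_mem (hNn.conj_mem m hm h) (Subgroup.inv_mem _ hm)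
      · have : h * m * h⁻¹ * m⁻¹ = h * (m * h⁻¹ * m⁻¹) := by group
        rw [this]
        exact (SLmod D q₁).mul_mem hh1 (hK1.conj_mem _ (Subgroup.inv_mem _ hh1) m)
    have hw : g * (m * (g⁻¹ * h) * m⁻¹ * (g⁻¹ * h)⁻¹) * g⁻¹ ∈ SLmod D q₂ :=
      hK.conj_mem _ ((SLmod D q₂).mul_mem (hK.conj_mem _ hh2 m) (Subgroup.inv_mem _ hh2)) g
    have key : g * m * g⁻¹ * m⁻¹
        = (g * (m * (g⁻¹ * h) * m⁻¹ * (g⁻¹ * h)⁻¹) * g⁻¹) * (h * m * h⁻¹ * m⁻¹) := by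
      group
    rw [key]
    have hle2 : SLmod D q₂ ≤ (N ⊓ SLmod D q₁) ⊔ SLmod D q₂ := le_sup_right
    have hle1 : N ⊓ SLmod D q₁ ≤ (N ⊓ SLmod D q₁) ⊔ SLmod D q₂ := le_sup_left
    exact Subgroup.mul_mem _ (hle2 hw) (hle1 hz)
  have split : g * (m * k) * g⁻¹ * (m * k)⁻¹
      = (g * m * g⁻¹ * m⁻¹) * (m * (g * k * g⁻¹ * k⁻¹) * m⁻¹) := by group
  rw [split]
  have hle2 : SLmod D q₂ ≤ (N ⊓ SLmod D q₁) ⊔ SLmod D q₂ := le_sup_right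
  exact Subgroup.mul_mem _ hcm (hle2 hck')
end

section
/- Let L be a commutative local ring in which 2 is a unit. Then PSL₂(L) has trivial centre; that is, if g ∈ SL₂(L) satisfies g·h·g⁻¹·h⁻¹ ∈ {I₂, −I₂} for every h ∈ SL₂(L), then g = I₂ or g = −I₂. -/
open Matrix

/-- Lemma 4.5. Let `L` be a commutative local ring in which `2` is a
unit. Then `PSL₂(L)` has trivial centre: if `g ∈ SL₂(L)` has `g h g⁻¹ h⁻¹ ∈ {±I₂}` for
every `h ∈ SL₂(L)`, then `g = ±I₂`. -/
theorem statement13 {L : Type*} [CommRing L] [IsLocalRing L] (h2 : IsUnit (2 : L))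
    (g : Matrix.SpecialLinearGroup (Fin 2) L)
    (hg : ∀ h : Matrix.SpecialLinearGroup (Fin 2) L,
      g * h * g⁻¹ * h⁻¹ = 1 ∨ g * h * g⁻¹ * h⁻¹ = -1) :
    g = 1 ∨ g = -1 := by
  have two_cancel : ∀ x : L, 2 * x = 0 → x = 0 := fun x hx =>
    h2.mul_left_cancel (b := x) (c := 0) (by simpa using hx)
  have key : ∀ h : Matrix.SpecialLinearGroup (Fin 2) L,
      g * h = h * g ∨ g * h = -(h * g) := by
    intro h
    rcases hg h with H | H
    · left
      have h1 : g * h * g⁻¹ = h := by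
        have := mul_inv_eq_one.mp H
        simpa using this
      calc g * h = (g * h * g⁻¹) * g := by group
        _ = h * g := by rw [h1]
    · right
      have h1 : g * h * g⁻¹ = -h := by
        have := mul_inv_eq_iff_eq_mul.mp H
        simpa using this
      calc g * h = (g * h * g⁻¹) * g := by group
        _ = -(h * g) := by rw [h1]; simp
  set a := g.1 0 0 with ha
  set b := g.1 0 1 with hb
  set c := g.1 1 0 with hc
  set d := g.1 1 1 with hd
  have hdet : a * d - b * c = 1 := by
    have := g.2
    rw [Matrix.det_fin_two] at this
    exact this
  have hG : g.1 = !![a, b; c, d] := Matrix.eta_fin_two g.1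
  have hdetE : Matrix.det !![(1:L), 1; 0, 1] = 1 := by simp
  have hdetF : Matrix.det !![(1:L), 0; 1, 1] = 1 := by simp
  set E : Matrix.SpecialLinearGroup (Fin 2) L := ⟨!![1,1;0,1], hdetE⟩ with hE
  set F : Matrix.SpecialLinearGroup (Fin 2) L := ⟨!![1,0;1,1], hdetF⟩ with hF
  have hcE : g * E = E * g := by
    rcases key E with H | H
    · exact H
    · exfalso
      have Hm : g.1 * E.1 = -(E.1 * g.1) := by
        have := congrArg (fun x : Matrix.SpecialLinearGroup (Fin 2) L =>
          (x : Matrix (Fin 2) (Fin 2) L)) H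
        simpa using this
      rw [hG, hE] at Hm
      simp only [Matrix.mul_fin_two] at Hm
      rw [← Matrix.ext_iff] at Hm
      simp only [Fin.forall_fin_two, Matrix.neg_apply, Matrix.cons_val', Matrix.cons_val_zero,
        Matrix.cons_val_one, Matrix.head_cons, Matrix.head_fin_const, Matrix.empty_val',
        Matrix.cons_val_fin_one, Matrix.of_apply] at Hm
      obtain ⟨⟨h00, h01⟩, h10, h11⟩ := Hm
      have hc0 : c = 0 := two_cancel c (by linear_combination h10)
      have ha0 : a = 0 := two_cancel a (by linear_combination h00 - hc0)
      have hd0 : d = 0 := two_cancel d (by linear_combination h11 - hc0)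
      have : (1:L) = 0 := by rw [← hdet, ha0, hc0, hd0]; ring
      exact one_ne_zero this
  have hcF : g * F = F * g := by
    rcases key F with H | H
    · exact H
    · exfalso
      have Hm : g.1 * F.1 = -(F.1 * g.1) := by
        have := congrArg (fun x : Matrix.SpecialLinearGroup (Fin 2) L =>
          (x : Matrix (Fin 2) (Fin 2) L)) H
        simpa using this
      rw [hG, hF] at Hm
      simp only [Matrix.mul_fin_two] at Hm
      rw [← Matrix.ext_iff] at Hm
      simp only [Fin.forall_fin_two, Matrix.neg_apply, Matrix.cons_val', Matrix.cons_val_zero,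
        Matrix.cons_val_one, Matrix.head_cons, Matrix.head_fin_const, Matrix.empty_val',
        Matrix.cons_val_fin_one, Matrix.of_apply] at Hm
      obtain ⟨⟨h00, h01⟩, h10, h11⟩ := Hm
      have hb0 : b = 0 := two_cancel b (by linear_combination h01)
      have ha0 : a = 0 := two_cancel a (by linear_combination h00 - hb0)
      have hd0 : d = 0 := two_cancel d (by linear_combination h11 - hb0)
      have : (1:L) = 0 := by rw [← hdet, ha0, hb0, hd0]; ring
      exact one_ne_zero this
  have HmE : g.1 * E.1 = E.1 * g.1 := by
    have := congrArg (fun x : Matrix.SpecialLinearGroup (Fin 2) L =>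
      (x : Matrix (Fin 2) (Fin 2) L)) hcE
    simpa using this
  have HmF : g.1 * F.1 = F.1 * g.1 := by
    have := congrArg (fun x : Matrix.SpecialLinearGroup (Fin 2) L =>
      (x : Matrix (Fin 2) (Fin 2) L)) hcF
    simpa using this
  rw [hG, hE] at HmE
  rw [hG, hF] at HmF
  simp only [Matrix.mul_fin_two] at HmE HmF
  rw [← Matrix.ext_iff] at HmE HmF
  simp only [Fin.forall_fin_two, Matrix.cons_val', Matrix.cons_val_zero,
    Matrix.cons_val_one, Matrix.head_cons, Matrix.head_fin_const, Matrix.empty_val',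
    Matrix.cons_val_fin_one, Matrix.of_apply] at HmE HmF
  obtain ⟨⟨e00, e01⟩, e10, e11⟩ := HmE
  obtain ⟨⟨f00, f01⟩, f10, f11⟩ := HmF
  have hc0 : c = 0 := by linear_combination -e00
  have hb0 : b = 0 := by linear_combination f00
  have had : a = d := by linear_combination e01
  have ha2 : (a - 1) * (a + 1) = 0 := by linear_combination hdet + a * had + c * hb0
  have hsum : IsUnit ((a + 1) + (1 - a)) := by
    have h22 : (a + 1) + (1 - a) = 2 := by ring
    rw [h22]; exact h2
  rcases IsLocalRing.isUnit_or_isUnit_of_isUnit_add hsum with hu | hu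
  · left
    have ha1 : a = 1 := by
      have := hu.mul_left_cancel (b := a - 1) (c := 0) (by linear_combination ha2)
      linear_combination this
    have hd1 : d = 1 := by rw [← had]; exact ha1
    apply Subtype.ext
    rw [hG, hb0, hc0, ha1, hd1]
    simp [Matrix.one_fin_two]
  · right
    have ha1 : a = -1 := by
      have := hu.mul_left_cancel (b := a + 1) (c := 0) (by linear_combination -ha2)
      linear_combination this
    have hd1 : d = -1 := by rw [← had]; exact ha1
    apply Subtype.ext
    rw [hG, hb0, hc0, ha1, hd1]
    simp [Matrix.one_fin_two]
end
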